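/- Let G be a connected graph on vertex set {1,...,n} with n ≥ 2, Φ = (F_1,...,F_n) with |V(F_i)| ≥ 2 for all i, and let D be a minimum dominating set of G[Φ]. If |D ∩ V(F_s)| = 2 for some s, then no vertex of F_s is adjacent in G[Φ] to a vertex of D − V(F_s), and D ∩ V(F_s) is a minimum dominating set of F_s. -/

import Mathlib

open scoped Classical

/-- A dominating set: every vertex is in `D` or adjacent to a vertex of `D`. -/
def isDominatingSet {V : Type*} (H : SimpleGraph V) (D : Finset V) : Prop :=
  ∀ v : V, v ∈ D ∨ ∃ u ∈ D, H.Adj u v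

/-- A total dominating set: every vertex has a neighbor in `D`. -/
def isTotalDominatingSet {V : Type*} (H : SimpleGraph V) (D : Finset V) : Prop :=
  ∀ v : V, ∃ u ∈ D, H.Adj u v

def isMinimalDominatingSet {V : Type*} (H : SimpleGraph V) (D : Finset V) : Prop :=
  isDominatingSet H D ∧ ∀ D' : Finset V, D' ⊂ D → ¬ isDominatingSet H D'

def isMinimalTotalDominatingSet {V : Type*} (H : SimpleGraph V) (D : Finset V) : Prop :=
  isTotalDominatingSet H D ∧ ∀ D' : Finset V, D' ⊂ D → ¬ isTotalDominatingSet H D'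

noncomputable def domNum {V : Type*} (H : SimpleGraph V) : ℕ :=
  sInf {k | ∃ D : Finset V, isDominatingSet H D ∧ D.card = k}

noncomputable def totalDomNum {V : Type*} (H : SimpleGraph V) : ℕ :=
  sInf {k | ∃ D : Finset V, isTotalDominatingSet H D ∧ D.card = k}

noncomputable def upperDomNum {V : Type*} (H : SimpleGraph V) : ℕ :=
  sSup {k | ∃ D : Finset V, isMinimalDominatingSet H D ∧ D.card = k}

noncomputable def upperTotalDomNum {V : Type*} (H : SimpleGraph V) : ℕ :=
  sSup {k | ∃ D : Finset V, isMinimalTotalDominatingSet H D ∧ D.card = k}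

/-- Well (γ-)dominated: all minimal dominating sets have the same size. -/
def WellDominated {V : Type*} (H : SimpleGraph V) : Prop :=
  ∀ D₁ D₂ : Finset V, isMinimalDominatingSet H D₁ → isMinimalDominatingSet H D₂ →
    D₁.card = D₂.card

/-- Well γ_t-dominated: all minimal total dominating sets have the same size. -/
def WellTotalDominated {V : Type*} (H : SimpleGraph V) : Prop :=
  ∀ D₁ D₂ : Finset V, isMinimalTotalDominatingSet H D₁ → isMinimalTotalDominatingSet H D₂ →
    D₁.card = D₂.card

/-- Restrained dominating set: dominating and every vertex outside `D` has a
neighbor outside `D`. -/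
def isRestrainedDominatingSet {V : Type*} (H : SimpleGraph V) (D : Finset V) : Prop :=
  isDominatingSet H D ∧ ∀ v ∉ D, ∃ u ∉ D, H.Adj u v

/-- Outer-connected dominating set: dominating and the subgraph induced by the
complement of `D` is connected. -/
def isOuterConnectedDominatingSet {V : Type*} (H : SimpleGraph V) (D : Finset V) : Prop :=
  isDominatingSet H D ∧ (H.induce ((↑D : Set V)ᶜ)).Connected

def isTotalRestrainedDominatingSet {V : Type*} (H : SimpleGraph V) (D : Finset V) : Prop :=
  isTotalDominatingSet H D ∧ ∀ v ∉ D, ∃ u ∉ D, H.Adj u v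

def isTotalOuterConnectedDominatingSet {V : Type*} (H : SimpleGraph V) (D : Finset V) : Prop :=
  isTotalDominatingSet H D ∧ (H.induce ((↑D : Set V)ᶜ)).Connected

noncomputable def restrainedDomNum {V : Type*} (H : SimpleGraph V) : ℕ :=
  sInf {k | ∃ D : Finset V, isRestrainedDominatingSet H D ∧ D.card = k}

noncomputable def ocDomNum {V : Type*} (H : SimpleGraph V) : ℕ :=
  sInf {k | ∃ D : Finset V, isOuterConnectedDominatingSet H D ∧ D.card = k}

noncomputable def totalRestrainedDomNum {V : Type*} (H : SimpleGraph V) : ℕ :=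
  sInf {k | ∃ D : Finset V, isTotalRestrainedDominatingSet H D ∧ D.card = k}

noncomputable def totalOcDomNum {V : Type*} (H : SimpleGraph V) : ℕ :=
  sInf {k | ∃ D : Finset V, isTotalOuterConnectedDominatingSet H D ∧ D.card = k}

/-- Paired dominating set: dominating and the induced subgraph on `D` has a
perfect matching. -/
def isPairedDominatingSet {V : Type*} (H : SimpleGraph V) (D : Finset V) : Prop :=
  isDominatingSet H D ∧
    ∃ M : SimpleGraph.Subgraph (H.induce (↑D : Set V)), M.IsPerfectMatching

noncomputable def pairedDomNum {V : Type*} (H : SimpleGraph V) : ℕ :=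
  sInf {k | ∃ D : Finset V, isPairedDominatingSet H D ∧ D.card = k}

def isIndependentSet {V : Type*} (H : SimpleGraph V) (D : Finset V) : Prop :=
  ∀ u ∈ D, ∀ v ∈ D, ¬ H.Adj u v

def isMaximalIndependentSet {V : Type*} (H : SimpleGraph V) (D : Finset V) : Prop :=
  isIndependentSet H D ∧ ∀ D' : Finset V, D ⊂ D' → ¬ isIndependentSet H D'

/-- The independent domination number `i(H)`. -/
noncomputable def indepDomNum {V : Type*} (H : SimpleGraph V) : ℕ :=
  sInf {k | ∃ D : Finset V, isMaximalIndependentSet H D ∧ D.card = k}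

/-- The independence number `β₀(H)`. -/
noncomputable def indepNum {V : Type*} (H : SimpleGraph V) : ℕ :=
  sSup {k | ∃ D : Finset V, isIndependentSet H D ∧ D.card = k}

/-- An efficient dominating set: every vertex is dominated by exactly one
member of `D`. -/
def isEfficientDominatingSet {V : Type*} (H : SimpleGraph V) (D : Finset V) : Prop :=
  ∀ v : V, ∃! u : V, u ∈ D ∧ (u = v ∨ H.Adj u v)

/-- The generalized lexicographic product `G[Φ]` of a graph `G` on `Fin n` and a
family `Φ = (F 0, …, F (n-1))` of pairwise disjoint graphs: the `F i` are induced
subgraphs, and vertices in distinct `F i`, `F j` are adjacent iff `i j ∈ E(G)`. -/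
def GLP {n : ℕ} (G : SimpleGraph (Fin n)) {V : Fin n → Type*}
    (F : ∀ i, SimpleGraph (V i)) : SimpleGraph (Σ i, V i) where
  Adj x y := (x.1 ≠ y.1 ∧ G.Adj x.1 y.1) ∨ ∃ h : x.1 = y.1, (F y.1).Adj (h ▸ x.2) y.2
  symm := by
    constructor
    rintro ⟨i, a⟩ ⟨j, b⟩ (⟨hne, hadj⟩ | ⟨h, hadj⟩)
    · exact Or.inl ⟨fun hh => hne hh.symm, hadj.symm⟩
    · dsimp only at h
      subst h
      exact Or.inr ⟨rfl, hadj.symm⟩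
  loopless := by
    constructor
    rintro ⟨i, a⟩ (⟨hne, _⟩ | ⟨h, hadj⟩)
    · exact hne rfl
    · exact (F i).irrefl hadj

/-- The number of vertices of `D ∩ V(F i)`. -/
noncomputable def layerCount {n : ℕ} {V : Fin n → Type*} [∀ i, Fintype (V i)]
    (D : Finset (Σ i, V i)) (i : Fin n) : ℕ :=
  (D.filter (fun x => x.1 = i)).card

/-
If a minimum dominating set `D` of `G[Φ]` meets `V(F_s)` in two vertices, then those two vertices
can be traded for any nonempty set `T ⊆ V(F_s)` which, together with `D − V(F_s)`, still dominates
`V(F_s)`: a single vertex of layer `s` dominates, through `G`, every layer that the old two did.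
Minimality of `D` then forces `|T| ≥ 2`. A vertex of `D − V(F_s)` adjacent to `F_s` dominates all of
`V(F_s)`, so `T` could be a single vertex; and a dominating set of `F_s` of size at most one would be
such a `T` as well.
-/

section Domination

variable {W : Type*} (H : SimpleGraph W)

theorem domNum_le_card {D : Finset W} (hD : isDominatingSet H D) : domNum H ≤ D.card :=
  Nat.sInf_le ⟨D, hD, rfl⟩

theorem exists_isDominatingSet_card_eq_domNum [Fintype W] :
    ∃ D : Finset W, isDominatingSet H D ∧ D.card = domNum H :=
  Nat.sInf_mem (s := {k | ∃ D : Finset W, isDominatingSet H D ∧ D.card = k})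
    ⟨_, Finset.univ, fun v => Or.inl (Finset.mem_univ v), rfl⟩

end Domination

section LexProduct

variable {n : ℕ} {G : SimpleGraph (Fin n)} {V : Fin n → Type*} {F : ∀ i, SimpleGraph (V i)}

theorem GLP_adj_of_fst_ne {x y : Σ i, V i} (h : x.1 ≠ y.1) :
    (GLP G F).Adj x y ↔ G.Adj x.1 y.1 := by
  simp [GLP, h]

theorem GLP_adj_mk_mk {i : Fin n} {a b : V i} :
    (GLP G F).Adj ⟨i, a⟩ ⟨i, b⟩ ↔ (F i).Adj a b := by
  simp [GLP]

theorem isDominatingSet_replace_layer {D : Finset (Σ i, V i)} (hD : isDominatingSet (GLP G F) D)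
    {s : Fin n} {T : Finset (V s)} (hT : T.Nonempty)
    (hTD : ∀ x : V s, x ∈ T ∨ (∃ t ∈ T, (F s).Adj t x) ∨
      ∃ u ∈ D, u.1 ≠ s ∧ (GLP G F).Adj u ⟨s, x⟩) :
    isDominatingSet (GLP G F) (T.map (Function.Embedding.sigmaMk s) ∪ D.filter (·.1 ≠ s)) := by
  obtain ⟨b, hb⟩ := hT
  have mem_left : ∀ t ∈ T, (⟨s, t⟩ : Σ i, V i) ∈
      T.map (Function.Embedding.sigmaMk s) ∪ D.filter (·.1 ≠ s) :=
    fun t ht => Finset.mem_union_left _ (Finset.mem_map_of_mem _ ht)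
  have mem_right : ∀ u ∈ D, u.1 ≠ s → u ∈
      T.map (Function.Embedding.sigmaMk s) ∪ D.filter (·.1 ≠ s) :=
    fun u hu hus => Finset.mem_union_right _ (Finset.mem_filter.2 ⟨hu, hus⟩)
  rintro ⟨i, x⟩
  by_cases hi : i = s
  · subst hi
    rcases hTD x with hx | ⟨t, ht, hadj⟩ | ⟨u, hu, hus, hadj⟩
    · exact Or.inl (mem_left x hx)
    · exact Or.inr ⟨_, mem_left t ht, GLP_adj_mk_mk.2 hadj⟩
    · exact Or.inr ⟨u, mem_right u hu hus, hadj⟩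
  rcases hD ⟨i, x⟩ with hx | ⟨u, hu, hadj⟩
  · exact Or.inl (mem_right _ hx hi)
  by_cases hus : u.1 = s
  · have hui : u.1 ≠ i := hus ▸ Ne.symm hi
    refine Or.inr ⟨⟨s, b⟩, mem_left b hb, (GLP_adj_of_fst_ne (Ne.symm hi)).2 ?_⟩
    exact hus ▸ (GLP_adj_of_fst_ne (x := u) (y := ⟨i, x⟩) hui).1 hadj
  · exact Or.inr ⟨u, mem_right u hu hus, hadj⟩

variable [∀ i, Fintype (V i)]

theorem card_filter_sigma_mk_mem (D : Finset (Σ i, V i)) (s : Fin n) :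
    (Finset.univ.filter fun a => (⟨s, a⟩ : Σ i, V i) ∈ D).card = layerCount D s := by
  refine Finset.card_bij (fun a _ => (⟨s, a⟩ : Σ i, V i)) ?_ ?_ ?_
  · intro a ha
    exact Finset.mem_filter.2 ⟨(Finset.mem_filter.1 ha).2, rfl⟩
  · intro a _ b _ h
    exact eq_of_heq (Sigma.mk.inj_iff.mp h).2
  · rintro ⟨i, x⟩ hx
    obtain ⟨hxD, rfl⟩ := Finset.mem_filter.1 hx
    exact ⟨x, Finset.mem_filter.2 ⟨Finset.mem_univ _, hxD⟩, rfl⟩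

theorem layerCount_le_card_of_replace_layer {D : Finset (Σ i, V i)}
    (hD : isDominatingSet (GLP G F) D) (hDmin : D.card = domNum (GLP G F))
    {s : Fin n} {T : Finset (V s)} (hT : T.Nonempty)
    (hTD : ∀ x : V s, x ∈ T ∨ (∃ t ∈ T, (F s).Adj t x) ∨
      ∃ u ∈ D, u.1 ≠ s ∧ (GLP G F).Adj u ⟨s, x⟩) :
    layerCount D s ≤ T.card := by
  have hmin := domNum_le_card _ (isDominatingSet_replace_layer hD hT hTD)
  have hunion := Finset.card_union_le (T.map (Function.Embedding.sigmaMk s)) (D.filter (·.1 ≠ s))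
  have hsplit : layerCount D s + (D.filter (·.1 ≠ s)).card = D.card :=
    Finset.card_filter_add_card_filter_not _
  rw [Finset.card_map] at hunion
  omega

end LexProduct

theorem stmt_7_general {n : ℕ} (G : SimpleGraph (Fin n))
    (V : Fin n → Type) [∀ i, Fintype (V i)] (F : ∀ i, SimpleGraph (V i))
    (D : Finset (Σ i, V i))
    (hD : isDominatingSet (GLP G F) D) (hDmin : D.card = domNum (GLP G F))
    (s : Fin n) (hs : layerCount D s = 2) :
    (∀ x : V s, ∀ y ∈ D, y.1 ≠ s → ¬ (GLP G F).Adj y ⟨s, x⟩) ∧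
    isDominatingSet (F s) (Finset.univ.filter fun a => (⟨s, a⟩ : Σ i, V i) ∈ D) ∧
    (Finset.univ.filter fun a => (⟨s, a⟩ : Σ i, V i) ∈ D).card = domNum (F s) := by
  set Ds := Finset.univ.filter fun a => (⟨s, a⟩ : Σ i, V i) ∈ D
  have hDs : Ds.card = 2 := (card_filter_sigma_mk_mem D s).trans hs
  obtain ⟨b, -⟩ := Finset.card_pos.1 (hDs ▸ two_pos : 0 < Ds.card)
  have hsep : ∀ x : V s, ∀ y ∈ D, y.1 ≠ s → ¬ (GLP G F).Adj y ⟨s, x⟩ := by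
    intro x y hy hys hadj
    have hGy : G.Adj y.1 s := (GLP_adj_of_fst_ne hys).1 hadj
    have := layerCount_le_card_of_replace_layer hD hDmin (Finset.singleton_nonempty b)
      fun x' => Or.inr (Or.inr ⟨y, hy, hys, (GLP_adj_of_fst_ne hys).2 hGy⟩)
    rw [hs, Finset.card_singleton] at this
    omega
  have hDsdom : isDominatingSet (F s) Ds := by
    intro x
    rcases hD ⟨s, x⟩ with hx | ⟨⟨i, a⟩, hu, hadj⟩
    · exact Or.inl (by simpa [Ds] using hx)
    obtain rfl : i = s := by_contra fun hi => hsep x ⟨i, a⟩ hu hi hadj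
    exact Or.inr ⟨a, by simpa [Ds] using hu, GLP_adj_mk_mk.1 hadj⟩
  refine ⟨hsep, hDsdom, le_antisymm ?_ (hDs ▸ domNum_le_card _ hDsdom)⟩
  obtain ⟨T, hT, hTcard⟩ := exists_isDominatingSet_card_eq_domNum (F s)
  have hTne : T.Nonempty := by
    rcases hT b with hb | ⟨t, ht, -⟩
    exacts [⟨b, hb⟩, ⟨t, ht⟩]
  rw [hDs, ← hs, ← hTcard]
  exact layerCount_le_card_of_replace_layer hD hDmin hTne fun x => (hT x).imp_right Or.inl

/-- If `D` is a minimum dominating set of `G[Φ]` and `|D ∩ V(F s)| = 2`, then no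
vertex of `F s` is adjacent to a vertex of `D − V(F s)`, and `D ∩ V(F s)` is a
minimum dominating set of `F s`. -/
theorem stmt_7 {n : ℕ} (hn : 2 ≤ n) (G : SimpleGraph (Fin n)) (hG : G.Connected)
    (V : Fin n → Type) [∀ i, Fintype (V i)] (F : ∀ i, SimpleGraph (V i))
    (hV : ∀ i, 2 ≤ Fintype.card (V i)) (D : Finset (Σ i, V i))
    (hD : isDominatingSet (GLP G F) D) (hDmin : D.card = domNum (GLP G F))
    (s : Fin n) (hs : layerCount D s = 2) :
    (∀ x : V s, ∀ y ∈ D, y.1 ≠ s → ¬ (GLP G F).Adj y ⟨s, x⟩) ∧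
    isDominatingSet (F s) (Finset.univ.filter fun a => (⟨s, a⟩ : Σ i, V i) ∈ D) ∧
    (Finset.univ.filter fun a => (⟨s, a⟩ : Σ i, V i) ∈ D).card = domNum (F s) :=
  stmt_7_general G V F D hD hDmin s hs
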